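/- arXiv:1510.08914 — 3 statements merged into one kernel-verified Lean document; each statement's English description precedes it below -/
import Mathlib

section
/- Let A be a unital associative ring and let x, b ∈ A satisfy [x, b] = b. Then for every natural number n ≥ 1, the iterated commutator satisfies [b², x², x², ..., x²] (with x² appearing n times) = (-4)ⁿ b² (x+1)ⁿ. -/
/-- The left-normed iterated Lie commutator `[a, b, b, ..., b]` (`n` copies of `b`). -/
def lieIter {A : Type*} [Ring A] (a b : A) : ℕ → A
  | 0 => a
  | n + 1 => lieIter a b n * b - b * lieIter a b n

/-!
From `[x, b] = b` we get `x b = b (x + 1)`, hence `x b² = b² (x + 2)` and `x² b² = b² (x + 2)²`.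
Whenever `c a = a d` with `c` and `d` commuting, commuting `a` with `c` `n` times gives
`a (c - d)ⁿ`; here `c - d = x² - (x + 2)² = -4 (x + 1)`.
-/

theorem SemiconjBy.pow_add_natCast {R : Type*} [Semiring R] {b x : R}
    (h : SemiconjBy b (x + 1) x) (k : ℕ) : SemiconjBy (b ^ k) (x + k) x := by
  induction k with
  | zero => simp
  | succ k ih =>
    have hshift : SemiconjBy b (x + (k + 1)) (x + k) := by
      simpa [add_assoc, add_comm (1 : R)] using h.add_right (Nat.cast_commute k b).symm
    simpa [pow_succ] using ih.mul_left hshift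

theorem lieIter_eq_mul_sub_pow {A : Type*} [Ring A] {a c d : A} (had : SemiconjBy a d c)
    (hcd : Commute c d) (n : ℕ) : lieIter a c n = a * (c - d) ^ n := by
  induction n with
  | zero => simp [lieIter]
  | succ n ih =>
    have hd : Commute d ((c - d) ^ n) := (hcd.symm.sub_right (Commute.refl d)).pow_right n
    calc lieIter a c (n + 1) = a * (c - d) ^ n * c - c * a * (c - d) ^ n := by
          rw [lieIter, ih, ← mul_assoc c]
      _ = a * ((c - d) ^ n * c - (c - d) ^ n * d) := by
          rw [← had.eq, mul_assoc a d, hd.eq, mul_sub, mul_assoc]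
      _ = a * (c - d) ^ (n + 1) := by rw [← mul_sub, pow_succ]

/-- in a unital associative ring, if `[x, b] = b`, then for every `n ≥ 1`,
`[b², x², ..., x²]` (with `x²` appearing `n` times) equals `(-4)ⁿ b² (x+1)ⁿ`. -/
theorem stmt4 (A : Type*) [Ring A] (x b : A) (h : x * b - b * x = b) :
    ∀ n : ℕ, 1 ≤ n → lieIter (b ^ 2) (x ^ 2) n = (-4 : A) ^ n * b ^ 2 * (x + 1) ^ n := by
  intro n _
  have hb : SemiconjBy b (x + 1) x := by
    rw [sub_eq_iff_eq_add] at h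
    rw [SemiconjBy, mul_add_one, h, add_comm]
  have hb2 : SemiconjBy (b ^ 2) ((x + 2) ^ 2) (x ^ 2) := by
    simpa using (hb.pow_add_natCast 2).pow_right 2
  have hx : Commute (x ^ 2) ((x + 2) ^ 2) :=
    ((Commute.refl x).add_right (Commute.ofNat_right x 2)).pow_pow 2 2
  have hdiff : x ^ 2 - (x + 2) ^ 2 = -4 * (x + 1) := by noncomm_ring; norm_num
  have h4 : Commute (-4 : A) (b ^ 2) := (Commute.ofNat_left 4 _).neg_left
  rw [lieIter_eq_mul_sub_pow hb2 hx, hdiff,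
    (Commute.ofNat_left 4 (x + 1)).neg_left.mul_pow, ← mul_assoc, (h4.pow_left n).eq]
end

section
/- Let A be an associative algebra over a commutative ring, and let x, y ∈ A be such that z = [x,y] commutes with both x and y. Then for every natural number r ≥ 1, the iterated commutator [x², (2xy - z), (2xy - z), ..., (2xy - z)] with 2xy - z appearing r times equals 4ʳ x² zʳ. -/
section

variable {A : Type*} [Ring A]

theorem lieIter_eq_mul_pow {a b t : A} (hab : a * b - b * a = a * t) (hbt : Commute b t) :
    ∀ n, lieIter a b n = a * t ^ n
  | 0 => by simp [lieIter]
  | n + 1 => by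
    rw [lieIter, lieIter_eq_mul_pow hab hbt n]
    calc a * t ^ n * b - b * (a * t ^ n)
        = a * (t ^ n * b) - b * a * t ^ n := by noncomm_ring
      _ = (a * b - b * a) * t ^ n := by rw [(hbt.pow_right n).eq.symm]; noncomm_ring
      _ = a * t ^ (n + 1) := by rw [hab, pow_succ']; noncomm_ring

theorem sq_mul_sub_mul_sq {x y z : A} (hz : x * y - y * x = z) (hxz : Commute x z) :
    x ^ 2 * y - y * x ^ 2 = 2 * (x * z) :=
  calc x ^ 2 * y - y * x ^ 2 = x * (x * y - y * x) + (x * y - y * x) * x := by noncomm_ring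
    _ = 2 * (x * z) := by rw [hz, ← hxz.eq]; noncomm_ring

theorem sq_mul_sub_mul_sq_two_mul_sub {x y z : A} (hz : x * y - y * x = z)
    (hxz : Commute x z) :
    x ^ 2 * (2 * (x * y) - z) - (2 * (x * y) - z) * x ^ 2 = x ^ 2 * (4 * z) :=
  calc x ^ 2 * (2 * (x * y) - z) - (2 * (x * y) - z) * x ^ 2
      = 2 * x * (x ^ 2 * y - y * x ^ 2) - (x ^ 2 * z - z * x ^ 2) := by noncomm_ring
    _ = x ^ 2 * (4 * z) := by
      rw [sq_mul_sub_mul_sq hz hxz, (hxz.pow_left 2).eq]; noncomm_ring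

end

theorem stmt6_general (A : Type*) [Ring A]
    (x y z : A) (hz : z = x * y - y * x) (hxz : x * z = z * x) (hyz : y * z = z * y) :
    ∀ r : ℕ, 1 ≤ r →
      lieIter (x ^ 2) (2 * (x * y) - z) r = (4 : A) ^ r * x ^ 2 * z ^ r := by
  intro r _
  have hwz : Commute (2 * (x * y) - z) z :=
    ((Commute.ofNat_left 2 z).mul_left (Commute.mul_left hxz hyz)).sub_left (Commute.refl z)
  rw [lieIter_eq_mul_pow (sq_mul_sub_mul_sq_two_mul_sub hz.symm hxz)
      ((Commute.ofNat_right _ 4).mul_right hwz),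
    (Commute.ofNat_left 4 z).mul_pow, ← mul_assoc, ((Commute.ofNat_left 4 _).pow_left r).eq]

/-- if `z = [x,y]` commutes with `x` and `y`, then for every `r ≥ 1`,
`[x², (2xy - z), ..., (2xy - z)]` (`r` times) equals `4ʳ x² zʳ`. -/
theorem stmt6 (R A : Type*) [CommRing R] [Ring A] [Algebra R A]
    (x y z : A) (hz : z = x * y - y * x) (hxz : x * z = z * x) (hyz : y * z = z * y) :
    ∀ r : ℕ, 1 ≤ r →
      lieIter (x ^ 2) (2 * (x * y) - z) r = (4 : A) ^ r * x ^ 2 * z ^ r :=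
  stmt6_general A x y z hz hxz hyz
end

section
/- Let L be a Lie algebra over a field, and let M be a Lie ideal of L such that M is nilpotent and the quotient L/[M,M] is nilpotent. Then L is nilpotent. (Stewart's theorem) -/
/-!
Hall's argument, run on the `M`-central series `L ≥ [M, L] ≥ [M, [M, L]] ≥ ⋯` of `L`, which
reaches `0` because `M` is nilpotent. Every factor of this series is a nilpotent `L`-module:
for the first one this is the nilpotency of `L / [M, M]`, and the Jacobi identity in the forms
`γ_{a+b} [M, N] ≤ [γ_a M, N] + [M, γ_b N]` (with `γ` the lower central series for the action
of `L`) and `[[M, M], N] ≤ [M, [M, N]]` carries nilpotency from each factor to the next.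
Stacking the factors, some term of the lower central series of `L` vanishes.
-/

open LieModule

section

variable {R L M : Type*} [CommRing R] [LieRing L] [LieAlgebra R L]
  [AddCommGroup M] [Module R M] [LieRingModule L M]

theorem LieSubmodule.lcs_add (N : LieSubmodule R L M) (m n : ℕ) :
    N.lcs (m + n) = (N.lcs n).lcs m :=
  Function.iterate_add_apply _ m n N

variable [LieModule R L M]

namespace LieSubmodule

theorem leibniz_lie_le (I J : LieIdeal R L) (N : LieSubmodule R L M) :
    ⁅I, ⁅J, N⁆⁆ ≤ ⁅⁅I, J⁆, N⁆ ⊔ ⁅J, ⁅I, N⁆⁆ := by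
  rw [lie_le_iff]
  intro x hx m hm
  suffices (⁅J, N⁆ : LieSubmodule R L M).toSubmodule ≤
      (⁅⁅I, J⁆, N⁆ ⊔ ⁅J, ⁅I, N⁆⁆ : LieSubmodule R L M).toSubmodule.comap (toEnd R L M x)
    from this hm
  rw [lieIdeal_oper_eq_linear_span', Submodule.span_le]
  rintro _ ⟨y, hy, n, hn, rfl⟩
  rw [SetLike.mem_coe, Submodule.mem_comap, toEnd_apply_apply, leibniz_lie x y n, mem_toSubmodule]
  exact add_mem (mem_sup_left (lie_mem_lie (lie_mem_lie hx hy) hn))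
    (mem_sup_right (lie_mem_lie hy (lie_mem_lie hx hn)))

theorem lie_lie_le (I J : LieIdeal R L) (N : LieSubmodule R L M) :
    ⁅⁅I, J⁆, N⁆ ≤ ⁅I, ⁅J, N⁆⁆ ⊔ ⁅J, ⁅I, N⁆⁆ := by
  rw [lie_le_iff]
  intro z hz m hm
  rw [← mem_toSubmodule, lieIdeal_oper_eq_linear_span'] at hz
  induction hz using Submodule.span_induction with
  | mem _ h =>
    obtain ⟨x, hx, y, hy, rfl⟩ := h
    rw [lie_lie x y m]
    exact sub_mem (mem_sup_left (lie_mem_lie hx (lie_mem_lie hy hm)))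
      (mem_sup_right (lie_mem_lie hy (lie_mem_lie hx hm)))
  | zero => simp
  | add _ _ _ _ h₁ h₂ => rw [add_lie]; exact add_mem h₁ h₂
  | smul t _ _ h => rw [smul_lie]; exact SMulMemClass.smul_mem t h

@[gcongr]
theorem lcs_mono (k : ℕ) {N₁ N₂ : LieSubmodule R L M} (h : N₁ ≤ N₂) :
    N₁.lcs k ≤ N₂.lcs k :=
  (gc_lcs_ucs k).monotone_l h

theorem lcs_le_lcs (N : LieSubmodule R L M) {m n : ℕ} (h : m ≤ n) : N.lcs n ≤ N.lcs m := by
  obtain ⟨d, rfl⟩ := exists_add_of_le h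
  rw [lcs_add]
  exact lcs_mono m (lcs_le_self d N)

theorem lcs_lie_le (A : LieIdeal R L) (N : LieSubmodule R L M) (a b : ℕ) :
    lcs (a + b) ⁅A, N⁆ ≤ ⁅lcs a A, N⁆ ⊔ ⁅A, N.lcs b⁆ := by
  suffices ∀ r p q, a + b ≤ r + p + q →
      lcs r ⁅lcs p A, N.lcs q⁆ ≤ ⁅lcs a A, N⁆ ⊔ ⁅A, N.lcs b⁆ from
    this (a + b) 0 0 le_rfl
  intro r
  induction r with
  | zero =>
    intro p q h
    rcases le_or_gt a p with hp | hp
    · exact le_sup_of_le_left (mono_lie (lcs_le_lcs A hp) (lcs_le_self q N))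
    · exact le_sup_of_le_right (mono_lie (lcs_le_self p A) (lcs_le_lcs N (by omega)))
  | succ r ih =>
    intro p q h
    calc lcs (r + 1) ⁅lcs p A, N.lcs q⁆ = lcs r ⁅⊤, ⁅lcs p A, N.lcs q⁆⁆ := rfl
      _ ≤ lcs r (⁅lcs (p + 1) A, N.lcs q⁆ ⊔ ⁅lcs p A, N.lcs (q + 1)⁆) := by
          gcongr; simpa using leibniz_lie_le ⊤ (lcs p A) (N.lcs q)
      _ ≤ _ := by
          rw [lcs_sup]; exact sup_le (ih _ _ (by omega)) (ih _ _ (by omega))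

end LieSubmodule

namespace LieIdeal

variable (I : LieIdeal R L)

theorem exists_lcs_lcs_le_lcs_succ {c n : ℕ} (hI : LieSubmodule.lcs c I ≤ ⁅I, I⁆)
    (hM : lowerCentralSeries R L M n ≤ ⁅I, ⊤⁆) (k : ℕ) :
    ∃ m, (I.lcs M k).lcs m ≤ I.lcs M (k + 1) := by
  induction k with
  | zero => exact ⟨n, hM⟩
  | succ k ih =>
    obtain ⟨m, hm⟩ := ih
    refine ⟨c + m, ?_⟩
    calc (I.lcs M (k + 1)).lcs (c + m) = LieSubmodule.lcs (c + m) ⁅I, I.lcs M k⁆ := by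
          rw [lcs_succ]
      _ ≤ ⁅LieSubmodule.lcs c I, I.lcs M k⁆ ⊔ ⁅I, (I.lcs M k).lcs m⁆ :=
          LieSubmodule.lcs_lie_le I (I.lcs M k) c m
      _ ≤ ⁅⁅I, I⁆, I.lcs M k⁆ ⊔ ⁅I, I.lcs M (k + 1)⁆ := by gcongr
      _ ≤ I.lcs M (k + 2) := by
          simpa using LieSubmodule.lie_lie_le I I (I.lcs M k)

theorem lcs_succ_le_map_lcs (k : ℕ) :
    I.lcs L (k + 1) ≤ (I.lcs I k).map (LieSubmodule.incl I) := by
  induction k with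
  | zero => simpa using LieSubmodule.lie_le_left I ⊤
  | succ k ih =>
    rw [lcs_succ _ L, lcs_succ _ I, LieSubmodule.map_bracket_eq]
    exact LieSubmodule.mono_lie_right I ih

theorem lieModule_isNilpotent_of_isNilpotent [LieRing.IsNilpotent I] :
    LieModule.IsNilpotent I L := by
  obtain ⟨k, hk⟩ := IsNilpotent.nilpotent R I I
  have hk' : I.lcs I k = ⊥ := by
    rw [← LieSubmodule.toSubmodule_inj, I.coe_lcs_eq, hk]; rfl
  refine (isNilpotent_iff R I L).mpr ⟨k + 1, ?_⟩
  rw [← LieSubmodule.toSubmodule_inj, ← I.coe_lcs_eq, LieSubmodule.bot_toSubmodule,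
    LieSubmodule.toSubmodule_eq_bot]
  simpa [hk'] using I.lcs_succ_le_map_lcs k

theorem exists_lowerCentralSeries_le_of_isNilpotent_quotient (h : LieRing.IsNilpotent (L ⧸ I)) :
    ∃ c, lowerCentralSeries R L L c ≤ I := by
  obtain ⟨k, hk⟩ := IsNilpotent.nilpotent R (L ⧸ I) (L ⧸ I)
  refine (isNilpotent_quotient_iff R L L I).mp ((isNilpotent_iff R L _).mpr ⟨k, ?_⟩)
  simp [← LieSubmodule.toSubmodule_inj, coe_lowerCentralSeries_ideal_quot_eq, hk]

end LieIdeal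

theorem LieModule.isNilpotent_of_isNilpotent_ideal (I : LieIdeal R L) [IsNilpotent I M]
    (hI : ∃ c, LieSubmodule.lcs c I ≤ ⁅I, I⁆)
    (hM : ∃ n, lowerCentralSeries R L M n ≤ ⁅I, ⊤⁆) :
    IsNilpotent L M := by
  obtain ⟨c, hc⟩ := hI
  obtain ⟨n, hn⟩ := hM
  obtain ⟨d, hd⟩ := IsNilpotent.nilpotent R I M
  have hd' : I.lcs M d = ⊥ := by
    rw [← LieSubmodule.toSubmodule_inj, I.coe_lcs_eq, hd]; rfl
  have lcs_le : ∀ k, ∃ m, lowerCentralSeries R L M m ≤ I.lcs M k := by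
    intro k
    induction k with
    | zero => exact ⟨0, le_rfl⟩
    | succ k ih =>
      obtain ⟨m, hm⟩ := ih
      obtain ⟨m', hm'⟩ := I.exists_lcs_lcs_le_lcs_succ hc hn k
      exact ⟨m' + m,
        (LieSubmodule.lcs_add ⊤ m' m).trans_le ((LieSubmodule.lcs_mono m' hm).trans hm')⟩
  obtain ⟨m, hm⟩ := lcs_le d
  exact (isNilpotent_iff R L M).mpr ⟨m, le_bot_iff.mp (hd' ▸ hm)⟩

end

/-- Stewart: if `M` is a nilpotent Lie ideal of `L` and `L/[M,M]`
is nilpotent, then `L` is nilpotent. -/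
theorem stmt15 (F L : Type*) [Field F] [LieRing L] [LieAlgebra F L]
    (M : LieIdeal F L) (hM : LieRing.IsNilpotent M)
    (hQ : LieRing.IsNilpotent (L ⧸ (⁅M, M⁆ : LieIdeal F L))) :
    LieRing.IsNilpotent L := by
  obtain ⟨c, hc⟩ := ⁅M, M⁆.exists_lowerCentralSeries_le_of_isNilpotent_quotient hQ
  have : LieModule.IsNilpotent M L := M.lieModule_isNilpotent_of_isNilpotent
  exact LieModule.isNilpotent_of_isNilpotent_ideal M
    ⟨c, (LieSubmodule.lcs_mono c le_top).trans hc⟩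
    ⟨c, hc.trans (LieSubmodule.mono_lie_right M le_top)⟩
end
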